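/- For the lazy cycle walk on ZMod n with stay probability p satisfying 0 < p < 1, the chain mixes to the uniform distribution: for all states i, j ∈ ZMod n, the k-step transition probability μ_k(i)(j) converges to 1/n as k → ∞. -/

import Mathlib

open scoped ENNReal

/-- One step of the lazy cycle walk on `ZMod n` with stay probability `p`:
stay at `i` with probability `p`, move to `i + 1` with probability `1 − p`. -/
noncomputable def lazyStep (n : ℕ) (p : ℝ) (hp : 0 ≤ p) (hp1 : p ≤ 1) (i : ZMod n) :
    PMF (ZMod n) :=
  (PMF.bernoulli (Real.toNNReal (1 - p)) (Real.toNNReal_le_one.mpr (by linarith))).map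
    (fun b => if b then i + 1 else i)

/-- The distribution of the lazy cycle walk after `k` steps started at `i`
(the `k`-fold monadic iterate of the one-step PMF). -/
noncomputable def lazyIter (n : ℕ) (p : ℝ) (hp : 0 ≤ p) (hp1 : p ≤ 1) :
    ℕ → ZMod n → PMF (ZMod n)
  | 0, i => PMF.pure i
  | k + 1, i => (lazyIter n p hp hp1 k i).bind (lazyStep n p hp hp1)

/-! The uniform distribution is stationary, since every column of the transition matrix also
sums to one. After `n` steps every state is reached from every other with probability at least
`q ^ n`, `q = min p (1 - p)`, so by Doeblin's argument `n` further steps shrink the `ℓ¹` distance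
to the uniform distribution by the factor `1 - n q ^ n < 1`. This distance never increases, hence
it tends to zero. -/

open Filter Topology

namespace PMF

variable {α β : Type*} [Fintype α]

lemma sum_toReal (μ : PMF α) : ∑ a, (μ a).toReal = 1 := by
  rw [← ENNReal.toReal_sum fun a _ => μ.apply_ne_top a, ← ENNReal.toReal_one, ← μ.tsum_coe,
    tsum_fintype]

lemma toReal_bind_apply (μ : PMF α) (κ : α → PMF β) (b : β) :
    ((μ.bind κ) b).toReal = ∑ a, (μ a).toReal * (κ a b).toReal := by
  rw [bind_apply, tsum_fintype, ENNReal.toReal_sum fun a _ =>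
    ENNReal.mul_ne_top (μ.apply_ne_top a) ((κ a).apply_ne_top b)]
  simp only [ENNReal.toReal_mul]

noncomputable def l1Dist (μ ν : PMF α) : ℝ := ∑ a, |(μ a).toReal - (ν a).toReal|

lemma l1Dist_nonneg (μ ν : PMF α) : 0 ≤ l1Dist μ ν :=
  Finset.sum_nonneg fun _ _ => abs_nonneg _

lemma abs_toReal_sub_le_l1Dist (μ ν : PMF α) (a : α) :
    |(μ a).toReal - (ν a).toReal| ≤ l1Dist μ ν :=
  Finset.single_le_sum (f := fun a => |(μ a).toReal - (ν a).toReal|)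
    (fun _ _ => abs_nonneg _) (Finset.mem_univ a)

/-- Doeblin's argument: since `μ - ν` has total mass zero, the part `c` common to all
transition probabilities cancels. -/
lemma l1Dist_bind_le [Fintype β] (μ ν : PMF α) (κ : α → PMF β) {c : ℝ}
    (hc : ∀ a b, c ≤ (κ a b).toReal) :
    l1Dist (μ.bind κ) (ν.bind κ) ≤ (1 - Fintype.card β * c) * l1Dist μ ν := by
  set δ : α → ℝ := fun a => (μ a).toReal - (ν a).toReal
  have hδ : ∑ a, δ a = 0 := by simp only [δ, Finset.sum_sub_distrib, sum_toReal, sub_self]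
  have hrow (a : α) : ∑ b, ((κ a b).toReal - c) = 1 - Fintype.card β * c := by
    simp [Finset.sum_sub_distrib, sum_toReal]
  have hbind (b : β) : ((μ.bind κ) b).toReal - ((ν.bind κ) b).toReal =
      ∑ a, δ a * ((κ a b).toReal - c) := by
    have hc' : ∑ a, δ a * c = 0 := by rw [← Finset.sum_mul, hδ, zero_mul]
    simp_rw [mul_sub (δ _), Finset.sum_sub_distrib (f := fun a => δ a * _), hc', sub_zero]
    simp only [toReal_bind_apply, δ, sub_mul, Finset.sum_sub_distrib]
  calc l1Dist (μ.bind κ) (ν.bind κ)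
      ≤ ∑ b, ∑ a, |δ a| * ((κ a b).toReal - c) := by
        refine Finset.sum_le_sum fun b _ => ?_
        rw [hbind]
        refine (Finset.abs_sum_le_sum_abs _ _).trans_eq (Finset.sum_congr rfl fun a _ => ?_)
        rw [abs_mul, abs_of_nonneg (sub_nonneg.mpr (hc a b))]
    _ = (1 - Fintype.card β * c) * l1Dist μ ν := by
        rw [Finset.sum_comm, l1Dist, Finset.mul_sum]
        refine Finset.sum_congr rfl fun a _ => ?_
        rw [← Finset.mul_sum, hrow, mul_comm]

lemma tendsto_apply_of_tendsto_l1Dist {ι : Type*} {l : Filter ι} {μ : ι → PMF α} {ν : PMF α}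
    (h : Tendsto (fun k => l1Dist (μ k) ν) l (𝓝 0)) (a : α) :
    Tendsto (fun k => μ k a) l (𝓝 (ν a)) := by
  rw [← ENNReal.tendsto_toReal_iff (fun k => (μ k).apply_ne_top a) (ν.apply_ne_top a),
    tendsto_iff_norm_sub_tendsto_zero]
  exact squeeze_zero (fun _ => norm_nonneg _) (fun k => abs_toReal_sub_le_l1Dist _ _ a) h

end PMF

lemma tendsto_zero_of_antitone_of_le_mul {d : ℕ → ℝ} {ρ : ℝ} {N : ℕ} (hd : Antitone d)
    (hd0 : ∀ k, 0 ≤ d k) (hρ : ρ < 1) (h : ∀ k, d (k + N) ≤ ρ * d k) :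
    Tendsto d atTop (𝓝 0) := by
  have hL := tendsto_atTop_ciInf hd ⟨0, Set.forall_mem_range.mpr hd0⟩
  have hL0 : 0 ≤ ⨅ k, d k := le_ciInf hd0
  have hLρ : ⨅ k, d k ≤ ρ * ⨅ k, d k :=
    le_of_tendsto_of_tendsto' (hL.comp (tendsto_add_atTop_nat N)) (hL.const_mul ρ) h
  rwa [show ⨅ k, d k = 0 by nlinarith] at hL

section LazyWalk

variable {n : ℕ} {p : ℝ} (hp : 0 ≤ p) (hp1 : p ≤ 1)

lemma lazyStep_apply (m j : ZMod n) :
    lazyStep n p hp hp1 m j =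
      (if m = j then ENNReal.ofReal p else 0) +
        (if m = j - 1 then ENNReal.ofReal (1 - p) else 0) := by
  have hstay : ((1 - (1 - p).toNNReal : NNReal) : ℝ≥0∞) = ENNReal.ofReal p := by
    rw [ENNReal.coe_sub, ENNReal.coe_one, ← ENNReal.ofReal_one, ← ENNReal.ofReal_coe_nnreal,
      Real.coe_toNNReal _ (by linarith), ← ENNReal.ofReal_sub _ (by linarith), sub_sub_cancel]
  simp only [lazyStep, PMF.map_apply, tsum_bool, PMF.bernoulli_apply, Bool.cond_false,
    Bool.cond_true, Bool.false_eq_true, ↓reduceIte, hstay, eq_sub_iff_add_eq, eq_comm (a := j)]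
  rfl

lemma bind_lazyStep_apply (μ : PMF (ZMod n)) (j : ZMod n) :
    μ.bind (lazyStep n p hp hp1) j =
      ENNReal.ofReal p * μ j + ENNReal.ofReal (1 - p) * μ (j - 1) := by
  simp_rw [PMF.bind_apply, lazyStep_apply, mul_add, mul_ite, mul_zero]
  rw [ENNReal.tsum_add, tsum_ite_eq, tsum_ite_eq, mul_comm (μ j), mul_comm (μ (j - 1))]

lemma toReal_lazyIter_succ_apply (k : ℕ) (i j : ZMod n) :
    (lazyIter n p hp hp1 (k + 1) i j).toReal =
      p * (lazyIter n p hp hp1 k i j).toReal +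
        (1 - p) * (lazyIter n p hp hp1 k i (j - 1)).toReal := by
  rw [lazyIter, bind_lazyStep_apply, ENNReal.toReal_add
    (ENNReal.mul_ne_top ENNReal.ofReal_ne_top (PMF.apply_ne_top _ _))
    (ENNReal.mul_ne_top ENNReal.ofReal_ne_top (PMF.apply_ne_top _ _)),
    ENNReal.toReal_mul, ENNReal.toReal_mul, ENNReal.toReal_ofReal hp,
    ENNReal.toReal_ofReal (sub_nonneg.2 hp1)]

-- The path staying `m - l` times and moving `l` times.
lemma min_pow_le_lazyIter_add_natCast {m l : ℕ} (hl : l ≤ m) (r : ZMod n) :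
    min p (1 - p) ^ m ≤ (lazyIter n p hp hp1 m r (r + l)).toReal := by
  have hq : 0 ≤ min p (1 - p) := le_min hp (sub_nonneg.2 hp1)
  induction m generalizing l with
  | zero => simp [Nat.le_zero.1 hl, lazyIter]
  | succ m ih =>
    rw [pow_succ', toReal_lazyIter_succ_apply]
    cases l with
    | zero =>
      refine le_add_of_le_of_nonneg ?_ (mul_nonneg (sub_nonneg.2 hp1) ENNReal.toReal_nonneg)
      exact mul_le_mul (min_le_left _ _) (ih m.zero_le) (pow_nonneg hq m) hp
    | succ l =>
      refine le_add_of_nonneg_of_le (mul_nonneg hp ENNReal.toReal_nonneg) ?_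
      rw [Nat.cast_succ, ← add_assoc, add_sub_cancel_right]
      exact mul_le_mul (min_le_right _ _) (ih (by omega)) (pow_nonneg hq m) (sub_nonneg.2 hp1)

lemma min_pow_le_lazyIter_apply [NeZero n] (r x : ZMod n) :
    min p (1 - p) ^ n ≤ (lazyIter n p hp hp1 n r x).toReal := by
  simpa using min_pow_le_lazyIter_add_natCast hp hp1 (x - r).val_lt.le r

lemma lazyIter_add (k m : ℕ) (i : ZMod n) :
    lazyIter n p hp hp1 (k + m) i = (lazyIter n p hp hp1 k i).bind (lazyIter n p hp hp1 m) := by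
  induction m with
  | zero => exact (PMF.bind_pure _).symm
  | succ m ih => rw [← add_assoc, lazyIter, ih, PMF.bind_bind]; rfl

lemma uniformOfFintype_bind_lazyStep [NeZero n] :
    (PMF.uniformOfFintype (ZMod n)).bind (lazyStep n p hp hp1) =
      PMF.uniformOfFintype (ZMod n) := by
  ext j
  rw [bind_lazyStep_apply, PMF.uniformOfFintype_apply, PMF.uniformOfFintype_apply, ← add_mul,
    ← ENNReal.ofReal_add hp (sub_nonneg.2 hp1), add_sub_cancel, ENNReal.ofReal_one, one_mul]

lemma uniformOfFintype_bind_lazyIter [NeZero n] (m : ℕ) :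
    (PMF.uniformOfFintype (ZMod n)).bind (lazyIter n p hp hp1 m) =
      PMF.uniformOfFintype (ZMod n) := by
  induction m with
  | zero => exact PMF.bind_pure _
  | succ m ih =>
    simp only [lazyIter]
    rw [← PMF.bind_bind, ih, uniformOfFintype_bind_lazyStep]

lemma l1Dist_lazyIter_add_le [NeZero n] {c : ℝ} {m : ℕ}
    (hc : ∀ r x, c ≤ (lazyIter n p hp hp1 m r x).toReal) (k : ℕ) (i : ZMod n) :
    PMF.l1Dist (lazyIter n p hp hp1 (k + m) i) (PMF.uniformOfFintype (ZMod n)) ≤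
      (1 - n * c) * PMF.l1Dist (lazyIter n p hp hp1 k i) (PMF.uniformOfFintype (ZMod n)) := by
  conv_lhs => rw [lazyIter_add, ← uniformOfFintype_bind_lazyIter hp hp1 m]
  simpa only [ZMod.card] using PMF.l1Dist_bind_le _ _ _ hc

end LazyWalk

/-- **Mixing of the lazy cycle walk.**
For `0 < p < 1` the lazy cycle walk on `ZMod n` mixes to the uniform
distribution: for all states `i, j`, the `k`-step transition probability
`μ_k(i)(j)` converges to `1/n` as `k → ∞`. -/
theorem lazy_cycle_mixes_to_uniform (n : ℕ) [NeZero n] (p : ℝ)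
    (hp : 0 < p) (hp1 : p < 1) (i j : ZMod n) :
    Filter.Tendsto (fun k : ℕ => lazyIter n p hp.le hp1.le k i j)
      Filter.atTop (nhds ((n : ℝ≥0∞))⁻¹) := by
  set d := fun k => PMF.l1Dist (lazyIter n p hp.le hp1.le k i) (PMF.uniformOfFintype (ZMod n))
  have hanti : Antitone d := antitone_nat_of_succ_le fun k => by
    simpa using l1Dist_lazyIter_add_le hp.le hp1.le (m := 1) (c := 0)
      (fun _ _ => ENNReal.toReal_nonneg) k i
  have hcontract (k : ℕ) : d (k + n) ≤ (1 - n * min p (1 - p) ^ n) * d k :=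
    l1Dist_lazyIter_add_le hp.le hp1.le (min_pow_le_lazyIter_apply hp.le hp1.le) k i
  have hρ : 1 - n * min p (1 - p) ^ n < 1 := by
    have : 0 < (n : ℝ) * min p (1 - p) ^ n :=
      mul_pos (Nat.cast_pos.2 (NeZero.pos n)) (pow_pos (lt_min hp (sub_pos.2 hp1)) n)
    linarith
  have hd := tendsto_zero_of_antitone_of_le_mul hanti (fun k => PMF.l1Dist_nonneg _ _) hρ hcontract
  simpa [PMF.uniformOfFintype_apply, ZMod.card] using PMF.tendsto_apply_of_tendsto_l1Dist hd j
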